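/- Let R be a commutative ring, r a natural number, and x : Fin r → R. Consider the family y indexed by ordered pairs (i, j) with i ≠ j, given by y(i,j) = x i − x j. Then the second elementary symmetric function of the family y (the sum over all unordered pairs of distinct indices of the products of the corresponding values) equals 2·r·e₂(x) − (r − 1)·e₁(x)², where e₁(x) = ∑_i x i and e₂(x) = ∑_{i<j} x i · x j. -/
import Mathlib

open Finset

lemma two_mul_esymm_two {R : Type*} [CommRing R] {ι : Type*} [DecidableEq ι]
    (s : Finset ι) (f : ι → R) :
    2 * ∑ t ∈ s.powersetCard 2, ∏ i ∈ t, f i =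
      (∑ i ∈ s, f i) ^ 2 - ∑ i ∈ s, f i ^ 2 := by
  induction s using Finset.induction with
  | empty =>
    rw [Finset.powersetCard_eq_empty.2 (by simp)]
    simp
  | @insert a s ha ih =>
    have hdis : Disjoint (s.powersetCard 2) ((s.powersetCard 1).image (insert a)) := by
      rw [Finset.disjoint_left]
      intro t ht ht'
      obtain ⟨u, _, rfl⟩ := Finset.mem_image.1 ht'
      exact ha ((Finset.mem_powersetCard.1 ht).1 (Finset.mem_insert_self a u))
    have hinj : ∀ t ∈ s.powersetCard 1, ∀ u ∈ s.powersetCard 1,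
        insert a t = insert a u → t = u := by
      intro t ht u hu h
      have hat : a ∉ t := fun hh => ha ((Finset.mem_powersetCard.1 ht).1 hh)
      have hau : a ∉ u := fun hh => ha ((Finset.mem_powersetCard.1 hu).1 hh)
      have := congrArg (fun v => Finset.erase v a) h
      simpa [Finset.erase_insert hat, Finset.erase_insert hau] using this
    have h2 : (2 : ℕ) = Nat.succ 1 := rfl
    rw [h2, Finset.powersetCard_succ_insert ha, Finset.sum_union hdis, ← h2]
    have himg : ∑ t ∈ (s.powersetCard 1).image (insert a), ∏ i ∈ t, f i
        = f a * ∑ i ∈ s, f i :=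
      calc ∑ t ∈ (s.powersetCard 1).image (insert a), ∏ i ∈ t, f i
          = ∑ t ∈ s.powersetCard 1, ∏ i ∈ insert a t, f i := Finset.sum_image (f := fun t => ∏ i ∈ t, f i) hinj
        _ = f a * ∑ i ∈ s, f i := by
            simp only [Finset.powersetCard_one, Finset.sum_map, Function.Embedding.coeFn_mk]
            rw [Finset.mul_sum]
            refine Finset.sum_congr rfl fun i hi => ?_
            have hai : a ∉ ({i} : Finset ι) := by
              simp only [Finset.mem_singleton]
              exact fun h => ha (h ▸ hi)
            rw [Finset.prod_insert hai, Finset.prod_singleton]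
    rw [himg, Finset.sum_insert ha, Finset.sum_insert ha, mul_add, ih]
    ring

lemma esymm_two_sub_family_int (r : ℕ) (x : Fin r → MvPolynomial (Fin r) ℤ) :
    ∑ t ∈ (Finset.univ : Finset {p : Fin r × Fin r // p.1 ≠ p.2}).powersetCard 2,
        ∏ p ∈ t, (x (p : Fin r × Fin r).1 - x (p : Fin r × Fin r).2) =
      2 * (r : MvPolynomial (Fin r) ℤ) *
          (∑ t ∈ (Finset.univ : Finset (Fin r)).powersetCard 2, ∏ i ∈ t, x i) -
        ((r : MvPolynomial (Fin r) ℤ) - 1) * (∑ i, x i) ^ 2 := by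
  have h2 : (2 : MvPolynomial (Fin r) ℤ) ≠ 0 := two_ne_zero
  apply mul_left_cancel₀ h2
  rw [two_mul_esymm_two]
  have key : ∀ g : Fin r × Fin r → MvPolynomial (Fin r) ℤ,
      (∀ p : Fin r × Fin r, p.1 = p.2 → g p = 0) →
      ∑ i : {p : Fin r × Fin r // p.1 ≠ p.2}, g (i : Fin r × Fin r)
        = ∑ p : Fin r × Fin r, g p := by
    intro g hg
    rw [← Finset.sum_filter_add_sum_filter_not Finset.univ (fun p => p.1 ≠ p.2) g,
      Finset.sum_eq_zero (fun p hp => hg p (not_not.1 (Finset.mem_filter.1 hp).2)),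
      add_zero]
    exact (Finset.sum_subtype _ (fun p => by simp) g).symm
  have e1 : ∑ i : {p : Fin r × Fin r // p.1 ≠ p.2},
      (x (i : Fin r × Fin r).1 - x (i : Fin r × Fin r).2)
      = ∑ p : Fin r × Fin r, (x p.1 - x p.2) :=
    key (fun p => x p.1 - x p.2) (fun p h => by simp [h])
  have e2 : ∑ i : {p : Fin r × Fin r // p.1 ≠ p.2},
      (x (i : Fin r × Fin r).1 - x (i : Fin r × Fin r).2) ^ 2
      = ∑ p : Fin r × Fin r, (x p.1 - x p.2) ^ 2 :=
    key (fun p => (x p.1 - x p.2) ^ 2) (fun p h => by simp [h])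
  rw [e1, e2, Fintype.sum_prod_type, Fintype.sum_prod_type]
  have hS : ∑ i : Fin r, ∑ j : Fin r, (x i - x j) = 0 := by
    simp only [Finset.sum_sub_distrib, Finset.sum_const, Finset.card_univ,
      Fintype.card_fin, nsmul_eq_mul, ← Finset.mul_sum]
    rw [sub_self]
  have hQ : ∑ i : Fin r, ∑ j : Fin r, (x i - x j) ^ 2
      = 2 * (r : MvPolynomial (Fin r) ℤ) * (∑ i, x i ^ 2)
        - 2 * (∑ i, x i) ^ 2 := by
    have hexp : ∀ i j : Fin r, (x i - x j) ^ 2 = x i ^ 2 - 2 * (x i * x j) + x j ^ 2 := by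
      intros; ring
    simp_rw [hexp, Finset.sum_add_distrib, Finset.sum_sub_distrib, Finset.sum_const,
      Finset.card_univ, Fintype.card_fin, ← Finset.mul_sum, nsmul_eq_mul]
    rw [← Finset.sum_mul, ← Finset.mul_sum]
    ring
  rw [hS, hQ]
  have he := two_mul_esymm_two (Finset.univ : Finset (Fin r)) x
  linear_combination (-2 * (r : MvPolynomial (Fin r) ℤ)) * he

/-- Let `R` be a commutative ring, `r` a natural number and `x : Fin r → R`.
Consider the family `y` indexed by ordered pairs `(i, j)` with `i ≠ j`, given by
`y (i,j) = x i − x j`.  Then the second elementary symmetric function of the family `y`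
(the sum, over all unordered pairs of distinct indices, of the products of the corresponding
values) equals `2·r·e₂(x) − (r − 1)·e₁(x)²`, where `e₁(x) = ∑ i, x i` and
`e₂(x) = ∑_{i<j} x i * x j`. -/
theorem esymm_two_sub_family (R : Type*) [CommRing R] (r : ℕ) (x : Fin r → R) :
    ∑ t ∈ (Finset.univ : Finset {p : Fin r × Fin r // p.1 ≠ p.2}).powersetCard 2,
        ∏ p ∈ t, (x (p : Fin r × Fin r).1 - x (p : Fin r × Fin r).2) =
      2 * (r : R) * (∑ t ∈ (Finset.univ : Finset (Fin r)).powersetCard 2, ∏ i ∈ t, x i) -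
        ((r : R) - 1) * (∑ i, x i) ^ 2 := by
  have key := esymm_two_sub_family_int r (fun i => MvPolynomial.X i)
  have := congrArg (MvPolynomial.aeval x : MvPolynomial (Fin r) ℤ →ₐ[ℤ] R) key
  simpa [map_sum, map_prod, map_sub, map_mul, map_pow] using this
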